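/- For every graph G without isolated vertices, |core(G)| ≥ (α(G) - μ(G)) + (|ker(G)| - d_c(G)). -/
import Mathlib


open Finset

open scoped Classical

variable {V : Type*}

/-- The neighborhood `N(X)` of a set of vertices `X`. -/
noncomputable def nbhd [Fintype V] (G : SimpleGraph V) (X : Finset V) : Finset V :=
  Finset.univ.filter (fun v => ∃ x ∈ X, G.Adj v x)

/-- The difference `d(X) = |X| - |N(X)|`. -/
noncomputable def diffd [Fintype V] (G : SimpleGraph V) (X : Finset V) : ℤ :=
  (X.card : ℤ) - ((nbhd G X).card : ℤ)

/-- The critical difference `d_c(G) = max{d(X) : X ⊆ V}`. -/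
noncomputable def critDiff [Fintype V] (G : SimpleGraph V) : ℤ :=
  Finset.univ.powerset.sup' ⟨∅, Finset.empty_mem_powerset _⟩ (diffd G)

/-- A set of vertices is independent if no two of its vertices are adjacent. -/
def IsIndep [Fintype V] (G : SimpleGraph V) (A : Finset V) : Prop :=
  ∀ a ∈ A, ∀ b ∈ A, ¬ G.Adj a b

/-- A critical independent set: independent with `d(A) = d_c(G)`. -/
def IsCritIndep [Fintype V] (G : SimpleGraph V) (A : Finset V) : Prop :=
  IsIndep G A ∧ diffd G A = critDiff G

/-- The independence number `α(G)`. -/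
noncomputable def indepNum [Fintype V] (G : SimpleGraph V) : ℕ :=
  (Finset.univ.powerset.filter (fun A => IsIndep G A)).sup Finset.card

/-- The independence number of the induced subgraph `G[X]`,
realized as the largest independent set contained in `X`. -/
noncomputable def indepNumOn [Fintype V] (G : SimpleGraph V) (X : Finset V) : ℕ :=
  (X.powerset.filter (fun A => IsIndep G A)).sup Finset.card

/-- A matching: a set of edges of `G`, pairwise vertex-disjoint. -/
def IsMatchingSet [Fintype V] (G : SimpleGraph V) (M : Finset (Sym2 V)) : Prop :=
  (∀ e ∈ M, e ∈ G.edgeSet) ∧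
  (∀ e ∈ M, ∀ f ∈ M, e ≠ f → ∀ v : V, v ∈ e → v ∉ f)

/-- The matching number `μ(G)`. -/
noncomputable def matchNum [Fintype V] (G : SimpleGraph V) : ℕ :=
  ((Finset.univ : Finset (Sym2 V)).powerset.filter (fun M => IsMatchingSet G M)).sup Finset.card

/-- The matching number of the induced subgraph `G[X]`, realized as the
largest matching of `G` all of whose edges have both endpoints in `X`. -/
noncomputable def matchNumOn [Fintype V] (G : SimpleGraph V) (X : Finset V) : ℕ :=
  ((Finset.univ : Finset (Sym2 V)).powerset.filter
    (fun M => IsMatchingSet G M ∧ ∀ e ∈ M, ∀ v ∈ e, v ∈ X)).sup Finset.card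

/-- `ker(G)`: the intersection of all critical independent sets. -/
noncomputable def kerG [Fintype V] (G : SimpleGraph V) : Finset V :=
  Finset.univ.filter (fun v => ∀ A : Finset V, IsCritIndep G A → v ∈ A)

/-- A maximum independent set, i.e. a member of `Ω(G)`. -/
def IsMaxIndep [Fintype V] (G : SimpleGraph V) (S : Finset V) : Prop :=
  IsIndep G S ∧ S.card = indepNum G

/-- `core(G)`: the intersection of all maximum independent sets. -/
noncomputable def coreG [Fintype V] (G : SimpleGraph V) : Finset V :=
  Finset.univ.filter (fun v => ∀ S : Finset V, IsMaxIndep G S → v ∈ S)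

/-- `corona(G)`: the union of all maximum independent sets. -/
noncomputable def coronaG [Fintype V] (G : SimpleGraph V) : Finset V :=
  Finset.univ.filter (fun v => ∃ S : Finset V, IsMaxIndep G S ∧ v ∈ S)

/-- `G` has no isolated vertices. -/
def NoIsolated (G : SimpleGraph V) : Prop := ∀ v : V, ∃ w, G.Adj v w

section Aux

variable [Fintype V] (G : SimpleGraph V)

lemma mem_nbhd' {X : Finset V} {v : V} : v ∈ nbhd G X ↔ ∃ x ∈ X, G.Adj v x := by
  simp [nbhd]

lemma diffd_le_critDiff (X : Finset V) : diffd G X ≤ critDiff G :=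
  Finset.le_sup' (diffd G) (Finset.mem_powerset.mpr (Finset.subset_univ X))

lemma nbhd_empty : nbhd G (∅ : Finset V) = ∅ := by
  simp [nbhd]

lemma critDiff_nonneg : 0 ≤ critDiff G := by
  have := diffd_le_critDiff G ∅
  simpa [diffd, nbhd_empty] using this

lemma indep_subset {A B : Finset V} (hA : IsIndep G A) (hBA : B ⊆ A) : IsIndep G B :=
  fun a ha b hb => hA a (hBA ha) b (hBA hb)

lemma card_le_indepNum {A : Finset V} (hA : IsIndep G A) : A.card ≤ indepNum G :=
  Finset.le_sup (Finset.mem_filter.mpr ⟨Finset.mem_powerset.mpr (Finset.subset_univ A), hA⟩)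

lemma notMem_nbhd_self {A : Finset V} (hA : IsIndep G A) {a : V} (ha : a ∈ A) :
    a ∉ nbhd G A := by
  intro h
  obtain ⟨x, hx, hadj⟩ := (mem_nbhd' G).mp h
  exact hA a ha x hx hadj

lemma exists_critIndep : ∃ A : Finset V, IsCritIndep G A := by
  have hex : ∃ X, critDiff G = diffd G X := by
    unfold critDiff
    obtain ⟨i, -, h⟩ :=
      Finset.exists_mem_eq_sup' (s := (Finset.univ : Finset V).powerset)
        ⟨∅, Finset.empty_mem_powerset _⟩ (diffd G)
    exact ⟨i, h⟩
  obtain ⟨X, hXd⟩ := hex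
  refine ⟨X \ nbhd G X, ?_, ?_⟩
  · intro a ha b hb hadj
    have hb' : b ∈ X := (Finset.mem_sdiff.mp hb).1
    exact (Finset.mem_sdiff.mp ha).2 ((mem_nbhd' G).mpr ⟨b, hb', hadj⟩)
  · refine le_antisymm (diffd_le_critDiff G _) ?_
    have hsub : nbhd G (X \ nbhd G X) ⊆ nbhd G X \ X := by
      intro v hv
      obtain ⟨a, ha, hadj⟩ := (mem_nbhd' G).mp hv
      have haX : a ∈ X := (Finset.mem_sdiff.mp ha).1
      refine Finset.mem_sdiff.mpr ⟨(mem_nbhd' G).mpr ⟨a, haX, hadj⟩, fun hvX => ?_⟩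
      exact (Finset.mem_sdiff.mp ha).2 ((mem_nbhd' G).mpr ⟨v, hvX, hadj.symm⟩)
    have hc1 : (nbhd G (X \ nbhd G X)).card ≤ (nbhd G X \ X).card :=
      Finset.card_le_card hsub
    have hc2 : (nbhd G X \ X).card + (nbhd G X ∩ X).card = (nbhd G X).card :=
      Finset.card_sdiff_add_card_inter _ _
    have hc3 : (X \ nbhd G X).card + (X ∩ nbhd G X).card = X.card :=
      Finset.card_sdiff_add_card_inter _ _
    have hc4 : (X ∩ nbhd G X).card = (nbhd G X ∩ X).card := by rw [Finset.inter_comm]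
    rw [hXd]
    unfold diffd
    omega

lemma critIndep_inter {A S : Finset V} (hA : IsCritIndep G A) (hS : IsMaxIndep G S) :
    IsCritIndep G (A ∩ S) := by
  have hAind := hA.1
  have hSind := hS.1
  constructor
  · exact indep_subset G hAind Finset.inter_subset_left
  -- key inequality : |A \ S| ≤ |S ∩ N(A)|
  have hkey : (A \ S).card ≤ (S ∩ nbhd G A).card := by
    have hS'ind : IsIndep G (A ∪ (S \ nbhd G A)) := by
      intro a ha b hb hadj
      rcases Finset.mem_union.mp ha with ha' | ha' <;>
        rcases Finset.mem_union.mp hb with hb' | hb'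
      · exact hAind a ha' b hb' hadj
      · exact (Finset.mem_sdiff.mp hb').2 ((mem_nbhd' G).mpr ⟨a, ha', hadj.symm⟩)
      · exact (Finset.mem_sdiff.mp ha').2 ((mem_nbhd' G).mpr ⟨b, hb', hadj⟩)
      · exact hSind a (Finset.mem_sdiff.mp ha').1 b (Finset.mem_sdiff.mp hb').1 hadj
    have hle : (A ∪ (S \ nbhd G A)).card ≤ S.card := by
      rw [hS.2]; exact card_le_indepNum G hS'ind
    have hAT : A ∩ (S \ nbhd G A) = A ∩ S := by
      ext a
      simp only [Finset.mem_inter, Finset.mem_sdiff]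
      exact ⟨fun h => ⟨h.1, h.2.1⟩, fun h => ⟨h.1, h.2, notMem_nbhd_self G hAind h.1⟩⟩
    have h1 : (A ∪ (S \ nbhd G A)).card + (A ∩ (S \ nbhd G A)).card
        = A.card + (S \ nbhd G A).card := Finset.card_union_add_card_inter _ _
    rw [hAT] at h1
    have h2 : (S \ nbhd G A).card + (S ∩ nbhd G A).card = S.card :=
      Finset.card_sdiff_add_card_inter _ _
    have h3 : (A \ S).card + (A ∩ S).card = A.card :=
      Finset.card_sdiff_add_card_inter _ _
    omega
  -- N(A ∩ S) ⊆ N(A) \ S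
  have hnb : nbhd G (A ∩ S) ⊆ nbhd G A \ S := by
    intro v hv
    obtain ⟨a, ha, hadj⟩ := (mem_nbhd' G).mp hv
    have haA : a ∈ A := (Finset.mem_inter.mp ha).1
    have haS : a ∈ S := (Finset.mem_inter.mp ha).2
    refine Finset.mem_sdiff.mpr ⟨(mem_nbhd' G).mpr ⟨a, haA, hadj⟩, fun hvS => ?_⟩
    exact hSind v hvS a haS hadj
  refine le_antisymm (diffd_le_critDiff G _) ?_
  have c1 : (nbhd G (A ∩ S)).card ≤ (nbhd G A \ S).card := Finset.card_le_card hnb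
  have c2 : (nbhd G A \ S).card + (nbhd G A ∩ S).card = (nbhd G A).card :=
    Finset.card_sdiff_add_card_inter _ _
  have c3 : (A \ S).card + (A ∩ S).card = A.card :=
    Finset.card_sdiff_add_card_inter _ _
  have c4 : (S ∩ nbhd G A).card = (nbhd G A ∩ S).card := by rw [Finset.inter_comm]
  have hAd : diffd G A = critDiff G := hA.2
  unfold diffd at hAd ⊢
  omega

lemma kerG_subset_coreG : kerG G ⊆ coreG G := by
  intro v hv
  have hv' := (Finset.mem_filter.mp hv).2
  refine Finset.mem_filter.mpr ⟨Finset.mem_univ _, fun S hS => ?_⟩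
  obtain ⟨A, hA⟩ := exists_critIndep G
  have hcrit := critIndep_inter G hA hS
  exact (Finset.mem_inter.mp (hv' _ hcrit)).2

lemma indepNum_le_matchNum_add_critDiff :
    (indepNum G : ℤ) ≤ (matchNum G : ℤ) + critDiff G := by
  classical
  -- a maximum independent set
  have hne : (Finset.univ.powerset.filter (fun A => IsIndep G A)).Nonempty :=
    ⟨∅, Finset.mem_filter.mpr ⟨Finset.empty_mem_powerset _, fun a ha => absurd ha (by simp)⟩⟩
  obtain ⟨S, hSmem, hSval⟩ := Finset.exists_mem_eq_sup _ hne Finset.card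
  have hSind : IsIndep G S := (Finset.mem_filter.mp hSmem).2
  have hScard : S.card = indepNum G := hSval.symm
  set k := (critDiff G).toNat with hkdef
  have hk : (k : ℤ) = critDiff G := Int.toNat_of_nonneg (critDiff_nonneg G)
  -- Hall setup
  set t : ↥S → Finset (V ⊕ Fin k) :=
    fun x => (nbhd G {(x : V)}).image Sum.inl ∪ (Finset.univ : Finset (Fin k)).image Sum.inr
    with ht
  have hall : ∀ sb : Finset ↥S, sb.card ≤ (sb.biUnion t).card := by
    intro sb
    rcases Finset.eq_empty_or_nonempty sb with rfl | hsbne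
    · simp
    set X := sb.image (Subtype.val) with hXdef
    have hcardX : X.card = sb.card := Finset.card_image_of_injective _ Subtype.val_injective
    have hsub : ((nbhd G X).image Sum.inl ∪
        (Finset.univ : Finset (Fin k)).image Sum.inr) ⊆ sb.biUnion t := by
      refine Finset.union_subset ?_ ?_
      · intro z hz
        obtain ⟨v, hv, rfl⟩ := Finset.mem_image.mp hz
        obtain ⟨x, hx, hadj⟩ := (mem_nbhd' G).mp hv
        obtain ⟨a, ha, rfl⟩ := Finset.mem_image.mp hx
        refine Finset.mem_biUnion.mpr ⟨a, ha, Finset.mem_union_left _ ?_⟩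
        exact Finset.mem_image_of_mem _
          ((mem_nbhd' G).mpr ⟨(a : V), Finset.mem_singleton_self _, hadj⟩)
      · obtain ⟨a, ha⟩ := hsbne
        intro z hz
        exact Finset.mem_biUnion.mpr ⟨a, ha, Finset.mem_union_right _ hz⟩
    have hdisj : Disjoint ((nbhd G X).image Sum.inl)
        ((Finset.univ : Finset (Fin k)).image Sum.inr) := by
      simp [Finset.disjoint_left]
    have hcu : ((nbhd G X).image Sum.inl ∪
        (Finset.univ : Finset (Fin k)).image Sum.inr).card = (nbhd G X).card + k := by
      rw [Finset.card_union_of_disjoint hdisj,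
        Finset.card_image_of_injective _ Sum.inl_injective,
        Finset.card_image_of_injective _ Sum.inr_injective, Finset.card_univ,
        Fintype.card_fin]
    have hcle := Finset.card_le_card hsub
    have hd := diffd_le_critDiff G X
    unfold diffd at hd
    rw [← hk] at hd
    omega
  obtain ⟨f, hfinj, hft⟩ := (Finset.all_card_le_biUnion_card_iff_exists_injective t).mp hall
  -- split S according to where f lands
  set p : ↥S → Prop := fun x => ∃ v : V, f x = Sum.inl v with hp
  set S₀ : Finset ↥S := Finset.univ.filter p with hS₀
  set S₁ : Finset ↥S := Finset.univ.filter (fun x => ¬ p x) with hS₁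
  have hsplit : S₀.card + S₁.card = S.card := by
    rw [hS₀, hS₁, Finset.card_filter_add_card_filter_not, Finset.card_univ,
      Fintype.card_coe]
  have hS₁le : S₁.card ≤ k := by
    have himg : S₁.image f ⊆ (Finset.univ : Finset (Fin k)).image Sum.inr := by
      intro z hz
      obtain ⟨x, hx, rfl⟩ := Finset.mem_image.mp hz
      have hnp : ¬ p x := (Finset.mem_filter.mp hx).2
      rcases hfx : f x with v | j
      · exact absurd ⟨v, hfx⟩ hnp
      · exact Finset.mem_image_of_mem _ (Finset.mem_univ _)
    have := Finset.card_le_card himg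
    rw [Finset.card_image_of_injective _ hfinj,
      Finset.card_image_of_injective _ Sum.inr_injective, Finset.card_univ,
      Fintype.card_fin] at this
    exact this
  -- the partner function
  set g : ↥S → V := fun x => Sum.elim id (fun _ => (x : V)) (f x) with hg
  have hgspec : ∀ x : ↥S, p x → f x = Sum.inl (g x) ∧ G.Adj (g x) (x : V) := by
    intro x hx
    obtain ⟨v, hv⟩ := hx
    have hgx : g x = v := by rw [hg]; simp [hv]
    have hmem := hft x
    rw [hv, ht] at hmem
    rcases Finset.mem_union.mp hmem with h | h
    · obtain ⟨w, hw, hww⟩ := Finset.mem_image.mp h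
      have : w = v := Sum.inl_injective hww
      subst this
      obtain ⟨y, hy, hadj⟩ := (mem_nbhd' G).mp hw
      rw [Finset.mem_singleton] at hy
      subst hy
      rw [hgx]
      exact ⟨hv, hadj⟩
    · obtain ⟨j, -, hj⟩ := Finset.mem_image.mp h
      exact absurd hj (by simp)
  have hgnS : ∀ x : ↥S, p x → g x ∉ S := by
    intro x hx hgS
    exact hSind (g x) hgS (x : V) x.2 (hgspec x hx).2
  -- the matching
  set M : Finset (Sym2 V) := S₀.image (fun x : ↥S => s((x : V), g x)) with hM
  have hMinj : Set.InjOn (fun x : ↥S => s((x : V), g x)) ↑S₀ := by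
    intro a ha b hb hab
    have hpa : p a := (Finset.mem_filter.mp ha).2
    have hpb : p b := (Finset.mem_filter.mp hb).2
    simp only [Sym2.eq_iff] at hab
    rcases hab with ⟨h1, h2⟩ | ⟨h1, h2⟩
    · exact Subtype.ext h1
    · refine absurd (show g b ∈ S by rw [← h1]; exact a.2) (hgnS b hpb)
  have hMcard : M.card = S₀.card := by
    rw [hM]; exact Finset.card_image_of_injOn hMinj
  have hMmatch : IsMatchingSet G M := by
    constructor
    · intro e he
      rw [hM] at he
      obtain ⟨x, hx, rfl⟩ := Finset.mem_image.mp he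
      have hpx : p x := (Finset.mem_filter.mp hx).2
      exact (SimpleGraph.mem_edgeSet G).mpr (hgspec x hpx).2.symm
    · intro e he f' hf' hef v hve hvf
      rw [hM] at he hf'
      obtain ⟨x, hx, rfl⟩ := Finset.mem_image.mp he
      obtain ⟨y, hy, rfl⟩ := Finset.mem_image.mp hf'
      have hpx : p x := (Finset.mem_filter.mp hx).2
      have hpy : p y := (Finset.mem_filter.mp hy).2
      have hxy : x ≠ y := fun h => hef (by rw [h])
      rw [Sym2.mem_iff] at hve hvf
      rcases hve with rfl | rfl <;> rcases hvf with h | h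
      · exact hxy (Subtype.ext h)
      · exact hgnS y hpy (h ▸ x.2)
      · exact hgnS x hpx (h.symm ▸ y.2)
      · apply hxy
        apply hfinj
        rw [(hgspec x hpx).1, (hgspec y hpy).1, h]
  have hMle : M.card ≤ matchNum G :=
    Finset.le_sup (Finset.mem_filter.mpr
      ⟨Finset.mem_powerset.mpr (Finset.subset_univ _), hMmatch⟩)
  have : indepNum G ≤ matchNum G + k := by omega
  calc (indepNum G : ℤ) ≤ (matchNum G : ℤ) + (k : ℤ) := by exact_mod_cast this
    _ = (matchNum G : ℤ) + critDiff G := by rw [hk]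

end Aux

/-- `|core(G)| ≥ (α(G) - μ(G)) + (|ker(G)| - d_c(G))`. -/
theorem stmt_10 {V : Type*} [Fintype V] (G : SimpleGraph V) (hiso : NoIsolated G) :
    ((indepNum G : ℤ) - (matchNum G : ℤ)) + (((kerG G).card : ℤ) - critDiff G) ≤
      ((coreG G).card : ℤ) := by
  have h1 := indepNum_le_matchNum_add_critDiff G
  have h2 : (kerG G).card ≤ (coreG G).card := Finset.card_le_card (kerG_subset_coreG G)
  have h2' : ((kerG G).card : ℤ) ≤ ((coreG G).card : ℤ) := by exact_mod_cast h2
  linarith
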